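/- Let β > 1, N ≥ 2, x_k = (k/N)^β for k = 0,…,N, and set γ̃ = 1 − 1/β ∈ (0,1). Then for every k ≥ 2 and every x ∈ [x_{k−1}, x_k], the mesh width satisfies h_k = x_k − x_{k−1} ≤ β 2^{βγ̃} N^{−1} x^{γ̃}. -/

import Mathlib

/-!
The graded mesh is the image of the uniform mesh `j / N` under `t ↦ t ^ β`. By the mean value
theorem, `h_k ≤ β (k/N)^(β-1) / N`; since `k ≤ 2 (k - 1)` for `k ≥ 2`, the right endpoint may be
replaced by the left one at the cost of `2^(β-1)`, and `((k-1)/N)^(β-1) = x_{k-1}^γ ≤ y^γ`.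
-/

open Real Set

lemma rpow_sub_rpow_le_mul_rpow_sub_one {β a b : ℝ} (hβ : 1 ≤ β) (hb : 0 ≤ b) (hab : b ≤ a) :
    a ^ β - b ^ β ≤ β * a ^ (β - 1) * (a - b) := by
  refine (convex_Icc b a).image_sub_le_mul_sub_of_deriv_le
    (continuous_rpow_const (by linarith)).continuousOn
    (differentiable_rpow_const hβ).differentiableOn (fun t ht => ?_)
    b ⟨le_rfl, hab⟩ a ⟨hab, le_rfl⟩ hab
  rw [interior_Icc] at ht
  rw [Real.deriv_rpow_const]
  gcongr
  · linarith [ht.1]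
  · exact ht.2.le

lemma rpow_add_sub_rpow_le_of_le {β b h : ℝ} (hβ : 1 ≤ β) (hh : 0 ≤ h) (hhb : h ≤ b) :
    (b + h) ^ β - b ^ β ≤ β * 2 ^ (β - 1) * b ^ (β - 1) * h := by
  have hb : 0 ≤ b := hh.trans hhb
  calc (b + h) ^ β - b ^ β ≤ β * (b + h) ^ (β - 1) * (b + h - b) :=
        rpow_sub_rpow_le_mul_rpow_sub_one hβ hb (by linarith)
    _ ≤ β * (2 * b) ^ (β - 1) * h := by
        rw [add_sub_cancel_left]
        gcongr; linarith
    _ = β * 2 ^ (β - 1) * b ^ (β - 1) * h := by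
        rw [mul_rpow zero_le_two hb]; ring

lemma one_sub_inv_mem_Ioo {β : ℝ} (hβ : 1 < β) : 1 - 1 / β ∈ Ioo (0 : ℝ) 1 := by
  have hβ0 : 0 < β := by linarith
  constructor
  · linarith [(div_lt_one hβ0).2 hβ]
  · linarith [one_div_pos.2 hβ0]

theorem graded_mesh_pointwise_bound_general (β : ℝ) (hβ : 1 < β) (N : ℕ)
    (x : ℕ → ℝ) (hx : ∀ k, x k = ((k : ℝ) / N) ^ β)
    (γ : ℝ) (hγ : γ = 1 - 1 / β) :
    γ ∈ Set.Ioo (0 : ℝ) 1 ∧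
    ∀ k, 2 ≤ k → k ≤ N → ∀ y ∈ Set.Icc (x (k - 1)) (x k),
      x k - x (k - 1) ≤ β * (2 : ℝ) ^ (β * γ) * (N : ℝ)⁻¹ * y ^ γ := by
  have hγ_mem : γ ∈ Ioo (0 : ℝ) 1 := hγ ▸ one_sub_inv_mem_Ioo hβ
  refine ⟨hγ_mem, fun k hk _ y hy => ?_⟩
  obtain ⟨j, rfl⟩ : ∃ j, k = j + 1 := ⟨k - 1, by omega⟩
  rw [Nat.add_sub_cancel] at hy ⊢
  have hβγ : β * γ = β - 1 := by rw [hγ]; field_simp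
  have hx_succ : x (j + 1) = ((j : ℝ) / N + (N : ℝ)⁻¹) ^ β := by
    rw [hx]; push_cast; ring_nf
  have hN_le : (N : ℝ)⁻¹ ≤ (j : ℝ) / N := by
    rw [div_eq_mul_inv]
    exact le_mul_of_one_le_left (by positivity) (by exact_mod_cast (by omega : 1 ≤ j))
  have hleft_le : ((j : ℝ) / N) ^ (β - 1) ≤ y ^ γ := by
    rw [← hβγ, rpow_mul (by positivity), ← hx]
    exact rpow_le_rpow (by rw [hx]; positivity) hy.1 hγ_mem.1.le
  calc x (j + 1) - x j ≤ β * 2 ^ (β - 1) * ((j : ℝ) / N) ^ (β - 1) * (N : ℝ)⁻¹ := by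
        rw [hx_succ, hx j]
        exact rpow_add_sub_rpow_le_of_le hβ.le (by positivity) hN_le
    _ ≤ β * 2 ^ (β - 1) * y ^ γ * (N : ℝ)⁻¹ := by gcongr
    _ = β * (2 : ℝ) ^ (β * γ) * (N : ℝ)⁻¹ * y ^ γ := by rw [hβγ]; ring

/-- For the `β`-graded mesh `x_k = (k/N)^β` with `β > 1`, `N ≥ 2`, `γ̃ = 1 − 1/β`:
for every `k ≥ 2` and every `y ∈ [x_{k−1}, x_k]`,
`x_k − x_{k−1} ≤ β 2^{βγ̃} N⁻¹ y^{γ̃}`. -/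
theorem graded_mesh_pointwise_bound (β : ℝ) (hβ : 1 < β) (N : ℕ) (hN : 2 ≤ N)
    (x : ℕ → ℝ) (hx : ∀ k, x k = ((k : ℝ) / N) ^ β)
    (γ : ℝ) (hγ : γ = 1 - 1 / β) :
    γ ∈ Set.Ioo (0 : ℝ) 1 ∧
    ∀ k, 2 ≤ k → k ≤ N → ∀ y ∈ Set.Icc (x (k - 1)) (x k),
      x k - x (k - 1) ≤ β * (2 : ℝ) ^ (β * γ) * (N : ℝ)⁻¹ * y ^ γ :=
  graded_mesh_pointwise_bound_general β hβ N x hx γ hγ
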